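/- Let K, n_s, p be positive integers. For each q ∈ {1, …, K} let X^q be a real n_s × p matrix and Y^q ∈ ℝ^{n_s}. Let b̄, b_Lasso ∈ ℝ^p, let M̄ ∈ ℝ and ς̄ ≥ 0, and define ē^q = Y^q − X^q b̄ and Δ = b̄ − b_Lasso. Assume (i) (1/K)·Σ_{q=1}^K (1/n_s)·‖Y^q − X^q b_Lasso‖₂² ≤ M̄ + ς̄, (ii) ‖b_Lasso‖₁ ≤ ‖b̄‖₁, and (iii) there is ρ* > 0 such that ρ*·‖v‖₂² ≤ (1/n_s)·‖X^q v‖₂² for every q ∈ {1, …, K} and every v ∈ ℝ^p. Then ‖b̄ − b_Lasso‖₂² ≤ ( | M̄ − (1/K)·Σ_{q=1}^K (1/n_s)·‖ē^q‖₂² | + (1/K)·Σ_{q=1}^K (4/n_s)·‖(X^q)ᵀ ē^q‖_∞·‖b̄‖₁ + ς̄ ) / ρ*. -/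
import Mathlib


/-- The squared Euclidean (ℓ2) norm of a vector. -/
noncomputable def l2normSq {m : ℕ} (v : Fin m → ℝ) : ℝ := ∑ i, (v i) ^ 2

/-- The ℓ1 norm of a vector. -/
noncomputable def l1norm {m : ℕ} (v : Fin m → ℝ) : ℝ := ∑ i, |v i|

/-- The ℓ∞ norm of a vector. -/
noncomputable def linftyNorm {m : ℕ} (v : Fin m → ℝ) : ℝ := ⨆ i, |v i|

lemma l2normSq_nonneg' {m : ℕ} (v : Fin m → ℝ) : 0 ≤ l2normSq v :=
  Finset.sum_nonneg fun _ _ => sq_nonneg _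

lemma l1norm_nonneg' {m : ℕ} (v : Fin m → ℝ) : 0 ≤ l1norm v :=
  Finset.sum_nonneg fun _ _ => abs_nonneg _

lemma abs_le_linftyNorm' {m : ℕ} (hm : 0 < m) (v : Fin m → ℝ) (i : Fin m) :
    |v i| ≤ linftyNorm v := by
  have : Nonempty (Fin m) := ⟨⟨0, hm⟩⟩
  exact le_ciSup (f := fun i => |v i|) (Set.Finite.bddAbove (Set.finite_range _)) i

lemma l2normSq_add' {m : ℕ} (e w : Fin m → ℝ) :
    l2normSq (e + w) = l2normSq e + 2 * (∑ i, e i * w i) + l2normSq w := by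
  simp only [l2normSq, Pi.add_apply, Finset.mul_sum]
  rw [← Finset.sum_add_distrib, ← Finset.sum_add_distrib]
  exact Finset.sum_congr rfl fun i _ => by ring

lemma dot_transpose' {n m : ℕ} (A : Matrix (Fin n) (Fin m) ℝ) (e : Fin n → ℝ) (v : Fin m → ℝ) :
    ∑ i, e i * A.mulVec v i = ∑ j, A.transpose.mulVec e j * v j := by
  have h1 : ∑ i, e i * A.mulVec v i = dotProduct e (A.mulVec v) := rfl
  have h2 : ∑ j, A.transpose.mulVec e j * v j = dotProduct (A.transpose.mulVec e) v := rfl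
  rw [h1, h2, Matrix.dotProduct_mulVec, Matrix.mulVec_transpose]

lemma abs_dot_le' {m : ℕ} (hm : 0 < m) (w v : Fin m → ℝ) :
    |∑ j, w j * v j| ≤ linftyNorm w * l1norm v := by
  calc |∑ j, w j * v j| ≤ ∑ j, |w j * v j| := Finset.abs_sum_le_sum_abs _ _
    _ ≤ ∑ j, linftyNorm w * |v j| := by
        refine Finset.sum_le_sum fun j _ => ?_
        rw [abs_mul]
        exact mul_le_mul_of_nonneg_right (abs_le_linftyNorm' hm w j) (abs_nonneg _)
    _ = linftyNorm w * l1norm v := by rw [l1norm, Finset.mul_sum]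

/-- deterministic content of Corollary 3, the case `n ≥ p`: the K-fold
cross-validation bound on the squared ℓ2 distance between the worst-case OLS estimator `b̄`
and the Lasso estimator, under a uniform minimal-eigenvalue condition. -/
theorem lasso_cv_estimator_bound_min_eigenvalue
    (K ns p : ℕ) (hK : 0 < K) (hns : 0 < ns) (hp : 0 < p)
    (X : Fin K → Matrix (Fin ns) (Fin p) ℝ) (Y : Fin K → Fin ns → ℝ)
    (bbar bLasso : Fin p → ℝ) (M ςbar : ℝ) (hς : 0 ≤ ςbar)
    (ebar : Fin K → Fin ns → ℝ) (hebar : ∀ q, ebar q = Y q - (X q).mulVec bbar)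
    (Δ : Fin p → ℝ) (hΔ : Δ = bbar - bLasso)
    (h1 : (1 / (K : ℝ)) * ∑ q, (1 / (ns : ℝ)) * l2normSq (Y q - (X q).mulVec bLasso)
            ≤ M + ςbar)
    (h2 : l1norm bLasso ≤ l1norm bbar)
    (ρstar : ℝ) (hρ : 0 < ρstar)
    (h3 : ∀ q, ∀ v : Fin p → ℝ, ρstar * l2normSq v ≤ (1 / (ns : ℝ)) * l2normSq ((X q).mulVec v)) :
    l2normSq (bbar - bLasso)
      ≤ (|M - (1 / (K : ℝ)) * ∑ q, (1 / (ns : ℝ)) * l2normSq (ebar q)|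
          + (1 / (K : ℝ)) * ∑ q, (4 / (ns : ℝ)) * linftyNorm ((X q).transpose.mulVec (ebar q))
              * l1norm bbar
          + ςbar) / ρstar := by
  have hnsR : (0:ℝ) < ns := by exact_mod_cast hns
  have hKR : (0:ℝ) < K := by exact_mod_cast hK
  -- Δ bound in l1
  have hΔ1 : l1norm Δ ≤ 2 * l1norm bbar := by
    have : l1norm Δ ≤ l1norm bbar + l1norm bLasso := by
      rw [hΔ, l1norm, l1norm, l1norm, ← Finset.sum_add_distrib]
      exact Finset.sum_le_sum fun i _ => by
        simpa using abs_sub (bbar i) (bLasso i)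
    linarith
  -- key decomposition
  have key : ∀ q, (1 / (ns:ℝ)) * l2normSq (Y q - (X q).mulVec bLasso)
      = (1 / (ns:ℝ)) * l2normSq (ebar q)
        + (2 / (ns:ℝ)) * (∑ j, (X q).transpose.mulVec (ebar q) j * Δ j)
        + (1 / (ns:ℝ)) * l2normSq ((X q).mulVec Δ) := by
    intro q
    have hsplit : Y q - (X q).mulVec bLasso = ebar q + (X q).mulVec Δ := by
      rw [hebar, hΔ, Matrix.mulVec_sub]
      funext i; simp
    rw [hsplit, l2normSq_add', dot_transpose' (X q) (ebar q) Δ]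
    ring
  set E : ℝ := (1 / (K:ℝ)) * ∑ q, (1 / (ns:ℝ)) * l2normSq (ebar q) with hE
  set T : ℝ := (1 / (K:ℝ)) * ∑ q, (4 / (ns:ℝ)) * linftyNorm ((X q).transpose.mulVec (ebar q))
      * l1norm bbar with hT
  -- step: ρ* ‖Δ‖² ≤ average of (1/ns)‖XΔ‖²
  have step1 : ρstar * l2normSq Δ
      ≤ (1 / (K:ℝ)) * ∑ q, (1 / (ns:ℝ)) * l2normSq ((X q).mulVec Δ) := by
    have h : (K:ℝ) * (ρstar * l2normSq Δ) ≤ ∑ q, (1 / (ns:ℝ)) * l2normSq ((X q).mulVec Δ) := by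
      calc (K:ℝ) * (ρstar * l2normSq Δ) = ∑ _q : Fin K, ρstar * l2normSq Δ := by
            simp [Finset.sum_const, Finset.card_univ]
        _ ≤ _ := Finset.sum_le_sum fun q _ => h3 q Δ
    calc ρstar * l2normSq Δ = (1 / (K:ℝ)) * ((K:ℝ) * (ρstar * l2normSq Δ)) := by
          field_simp
      _ ≤ _ := mul_le_mul_of_nonneg_left h (by positivity)
  -- bound the cross term sum
  have cross : ∀ q, -((2 / (ns:ℝ)) * (∑ j, (X q).transpose.mulVec (ebar q) j * Δ j))
      ≤ (4 / (ns:ℝ)) * linftyNorm ((X q).transpose.mulVec (ebar q)) * l1norm bbar := by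
    intro q
    have h4 := abs_dot_le' hp ((X q).transpose.mulVec (ebar q)) Δ
    have hln : 0 ≤ linftyNorm ((X q).transpose.mulVec (ebar q)) :=
      le_trans (abs_nonneg _) (abs_le_linftyNorm' hp _ ⟨0, hp⟩)
    have habs : -(∑ j, (X q).transpose.mulVec (ebar q) j * Δ j)
        ≤ linftyNorm ((X q).transpose.mulVec (ebar q)) * l1norm Δ :=
      le_trans (neg_le_abs _) h4
    have h5 : linftyNorm ((X q).transpose.mulVec (ebar q)) * l1norm Δ
        ≤ linftyNorm ((X q).transpose.mulVec (ebar q)) * (2 * l1norm bbar) :=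
      mul_le_mul_of_nonneg_left hΔ1 hln
    have hns2 : (0:ℝ) ≤ 2 / (ns:ℝ) := by positivity
    have h6 := mul_le_mul_of_nonneg_left (habs.trans h5) hns2
    have h7 : (4 / (ns:ℝ)) * linftyNorm ((X q).transpose.mulVec (ebar q)) * l1norm bbar
        = 2 / (ns:ℝ) * (linftyNorm ((X q).transpose.mulVec (ebar q)) * (2 * l1norm bbar)) := by
      ring
    rw [h7]
    linarith [h6]
  have step2 : ρstar * l2normSq Δ ≤ (M + ςbar) - E + T := by
    have decomp : (1 / (K:ℝ)) * ∑ q, (1 / (ns:ℝ)) * l2normSq ((X q).mulVec Δ)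
        = (1 / (K:ℝ)) * ∑ q, (1 / (ns:ℝ)) * l2normSq (Y q - (X q).mulVec bLasso)
          - E
          - (1 / (K:ℝ)) * ∑ q, (2 / (ns:ℝ)) * (∑ j, (X q).transpose.mulVec (ebar q) j * Δ j) := by
      rw [hE, ← mul_sub, ← mul_sub]
      congr 1
      rw [← Finset.sum_sub_distrib, ← Finset.sum_sub_distrib]
      exact Finset.sum_congr rfl fun q _ => by rw [key q]; ring
    have crossSum : -((1 / (K:ℝ)) * ∑ q, (2 / (ns:ℝ)) * (∑ j, (X q).transpose.mulVec (ebar q) j * Δ j))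
        ≤ T := by
      rw [hT, ← mul_neg, ← Finset.sum_neg_distrib]
      refine mul_le_mul_of_nonneg_left (Finset.sum_le_sum fun q _ => cross q) (by positivity)
    calc ρstar * l2normSq Δ ≤ _ := step1
      _ = _ := decomp
      _ ≤ (M + ςbar) - E + T := by
          have := h1
          linarith [crossSum]
  have step3 : ρstar * l2normSq Δ ≤ |M - E| + T + ςbar := by
    have : M - E ≤ |M - E| := le_abs_self _
    linarith
  rw [le_div_iff₀ hρ]
  rw [hΔ] at step3
  linarith [step3]
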